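/- Let u be a C³ harmonic function on an open set Ω ⊆ ℝⁿ \ {0} and define v(y) = u(y)/|y| − ⟨∇u(y), y⟩/|y|. Then v satisfies the elliptic equation Δv(y) + (2/|y|²)·⟨y, ∇v(y)⟩ + ((n−1)/|y|²)·v(y) = 0 on Ω. -/

import Mathlib

/-!
Write `r = ‖y‖` and `w = u - ⟪∇u, y⟫`, so that `w = r v` away from `0`. The Euler operator
`E u = ⟪∇u, y⟫` satisfies `Δ (E u) = 2 Δu + E (Δu)`, by the symmetry of the third derivative of
`u`; hence `w` is harmonic. On the other hand `∇r = y / r` and `Δr = (n - 1) / r`, so the product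
rule gives `Δ (r v) = r (Δv + (2 / r²) ⟪y, ∇v⟫ + ((n - 1) / r²) v)`.
-/

open RealInnerProductSpace

noncomputable def lap {n : ℕ} (u : EuclideanSpace ℝ (Fin n) → ℝ)
    (x : EuclideanSpace ℝ (Fin n)) : ℝ :=
  ∑ i : Fin n, fderiv ℝ (fun y => fderiv ℝ u y (EuclideanSpace.single i 1)) x
    (EuclideanSpace.single i 1)

open Filter Topology InnerProductSpace Laplacian
open scoped Gradient

section ThirdDerivative

variable {E F G : Type*} [NormedAddCommGroup E] [NormedSpace ℝ E] [NormedAddCommGroup F]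
  [NormedSpace ℝ F] [NormedAddCommGroup G] [NormedSpace ℝ G]

theorem ContDiffAt.differentiableAt_fderiv {f : E → F} {x : E} {n : WithTop ℕ∞}
    (hf : ContDiffAt ℝ n f x) (hn : 2 ≤ n) : DifferentiableAt ℝ (fderiv ℝ f) x :=
  (hf.fderiv_right (m := 1) (by simpa [one_add_one_eq_two] using hn)).differentiableAt one_ne_zero

theorem fderiv_clm_apply_const_apply {Φ : E → G →L[ℝ] F} {x : E} (hΦ : DifferentiableAt ℝ Φ x)
    (v : G) (h : E) : fderiv ℝ (fun z => Φ z v) x h = fderiv ℝ Φ x h v := by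
  rw [fderiv_clm_apply hΦ (differentiableAt_const v)]
  simp

theorem fderiv_clm_apply_const_apply₂ {Φ : E → E →L[ℝ] G →L[ℝ] F} {x : E}
    (hΦ : DifferentiableAt ℝ Φ x) (a b : E) (c : G) :
    fderiv ℝ (fun z => Φ z b c) x a = fderiv ℝ Φ x a b c := by
  rw [fderiv_clm_apply_const_apply (hΦ.clm_apply (differentiableAt_const b)),
    fderiv_clm_apply_const_apply hΦ]

variable {u : E → F} {x : E}

theorem ContDiffAt.fderiv_fderiv_fderiv_comm_right (hu : ContDiffAt ℝ 3 u x) (a b c : E) :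
    fderiv ℝ (fderiv ℝ (fderiv ℝ u)) x a b c = fderiv ℝ (fderiv ℝ (fderiv ℝ u)) x a c b := by
  have hB := (hu.fderiv_right (m := 2) (by norm_num)).differentiableAt_fderiv le_rfl
  have hsymm : (fun z => fderiv ℝ (fderiv ℝ u) z b c) =ᶠ[𝓝 x]
      fun z => fderiv ℝ (fderiv ℝ u) z c b := by
    filter_upwards [hu.eventually (by simp)] with z hz
    exact hz.isSymmSndFDerivAt (by norm_num [minSmoothness_of_isRCLikeNormedField]) b c
  rw [← fderiv_clm_apply_const_apply₂ hB, ← fderiv_clm_apply_const_apply₂ hB, hsymm.fderiv_eq]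

theorem ContDiffAt.fderiv_fderiv_fderiv_comm_left (hu : ContDiffAt ℝ 3 u x) (a b c : E) :
    fderiv ℝ (fderiv ℝ (fderiv ℝ u)) x a b c = fderiv ℝ (fderiv ℝ (fderiv ℝ u)) x b a c := by
  have hB := (hu.fderiv_right (m := 2) (by norm_num)).differentiableAt_fderiv le_rfl
  set φ : E → F := fun z => fderiv ℝ u z c
  have hφ : ContDiffAt ℝ 2 φ x :=
    (hu.fderiv_right (m := 2) (by norm_num)).clm_apply contDiffAt_const
  have hφB : ∀ a b, fderiv ℝ (fderiv ℝ φ) x a b = fderiv ℝ (fderiv ℝ (fderiv ℝ u)) x a b c := by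
    intro a b
    rw [← fderiv_clm_apply_const_apply (hφ.differentiableAt_fderiv le_rfl),
      ← fderiv_clm_apply_const_apply₂ hB]
    refine congrFun (congrArg DFunLike.coe (EventuallyEq.fderiv_eq ?_)) a
    filter_upwards [hu.eventually (by simp)] with z hz
    exact fderiv_clm_apply_const_apply (hz.differentiableAt_fderiv (by norm_num)) c b
  rw [← hφB, ← hφB, hφ.isSymmSndFDerivAt (by norm_num [minSmoothness_of_isRCLikeNormedField])]

end ThirdDerivative

section Norm

variable {E : Type*} [NormedAddCommGroup E] [InnerProductSpace ℝ E] {x : E}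

theorem hasFDerivAt_norm (hx : x ≠ 0) :
    HasFDerivAt (fun z : E => ‖z‖) (‖x‖⁻¹ • innerSL ℝ x) x := by
  have h := (hasStrictFDerivAt_norm_sq x).hasFDerivAt.sqrt (by positivity)
  simp only [Real.sqrt_sq (norm_nonneg _)] at h
  convert h using 1
  ext h
  simp
  field_simp

theorem gradient_norm [CompleteSpace E] (hx : x ≠ 0) : ∇ (fun z : E => ‖z‖) x = ‖x‖⁻¹ • x := by
  rw [gradient, (hasFDerivAt_norm hx).fderiv]
  apply (toDual ℝ E).injective
  ext
  simp

end Norm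

section Laplacian

variable {E F : Type*} [NormedAddCommGroup E] [InnerProductSpace ℝ E] [FiniteDimensional ℝ E]
  [NormedAddCommGroup F] [NormedSpace ℝ F] {x : E}

theorem laplacian_eq_sum_fderiv_fderiv {ι : Type*} [Fintype ι] (b : OrthonormalBasis ι ℝ E)
    (f : E → F) (x : E) : Δ f x = ∑ i, fderiv ℝ (fderiv ℝ f) x (b i) (b i) := by
  simp [laplacian_eq_iteratedFDeriv_orthonormalBasis f b, iteratedFDeriv_two_apply]

theorem inner_gradient_eq_sum {ι : Type*} [Fintype ι] (b : OrthonormalBasis ι ℝ E)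
    (f g : E → ℝ) (x : E) :
    ⟪∇ f x, ∇ g x⟫ = ∑ i, fderiv ℝ f x (b i) * fderiv ℝ g x (b i) := by
  rw [← b.sum_inner_mul_inner]
  refine Finset.sum_congr rfl fun i _ => ?_
  rw [inner_gradient_left, real_inner_comm, inner_gradient_left]

theorem ContDiffAt.laplacian_mul {f g : E → ℝ} (hf : ContDiffAt ℝ 2 f x)
    (hg : ContDiffAt ℝ 2 g x) :
    Δ (fun z => f z * g z) x = f x * Δ g x + 2 * ⟪∇ f x, ∇ g x⟫ + Δ f x * g x := by
  have hD : fderiv ℝ (fun z => f z * g z) =ᶠ[𝓝 x]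
      fun z => f z • fderiv ℝ g z + g z • fderiv ℝ f z := by
    filter_upwards [hf.eventually (by simp), hg.eventually (by simp)] with z hfz hgz
    exact fderiv_fun_mul (hfz.differentiableAt (by simp)) (hgz.differentiableAt (by simp))
  have hD' := ((hf.differentiableAt (by simp)).hasFDerivAt.fun_smul
      (hg.differentiableAt_fderiv le_rfl).hasFDerivAt).fun_add
    ((hg.differentiableAt (by simp)).hasFDerivAt.fun_smul
      (hf.differentiableAt_fderiv le_rfl).hasFDerivAt)
  let b := stdOrthonormalBasis ℝ E
  simp only [laplacian_eq_sum_fderiv_fderiv b, inner_gradient_eq_sum b, hD.fderiv_eq,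
    hD'.fderiv, Finset.mul_sum, Finset.sum_mul, ← Finset.sum_add_distrib]
  refine Finset.sum_congr rfl fun i _ => ?_
  simp only [add_apply, smul_apply, ContinuousLinearMap.smulRight_apply, smul_eq_mul]
  ring

theorem laplacian_norm (hx : x ≠ 0) :
    Δ (fun z : E => ‖z‖) x = (Module.finrank ℝ E - 1) / ‖x‖ := by
  have hnx : ‖x‖ ≠ 0 := norm_ne_zero_iff.mpr hx
  have hinv : HasFDerivAt (fun z : E => ‖z‖⁻¹) (-(‖x‖ ^ 2)⁻¹ • ‖x‖⁻¹ • innerSL ℝ x) x :=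
    (hasDerivAt_inv hnx).comp_hasFDerivAt x (hasFDerivAt_norm hx)
  have hterm : ∀ e : E, fderiv ℝ (fderiv ℝ fun z : E => ‖z‖) x e e
      = ‖x‖⁻¹ * ‖e‖ ^ 2 - ‖x‖⁻¹ ^ 3 * (⟪x, e⟫ * ⟪e, x⟫) := by
    intro e
    -- `z ↦ innerSL ℝ z` is typed as conjugate-linear (`E →L⋆[ℝ] _`), which `simp` cannot see
    -- through after differentiating; `z ↦ innerSL ℝ e z` is an honest `E →L[ℝ] ℝ`.
    have hD : (fun z => fderiv ℝ (fun z : E => ‖z‖) z e) =ᶠ[𝓝 x]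
        fun z => ‖z‖⁻¹ * innerSL ℝ e z := by
      filter_upwards [eventually_ne_nhds hx] with z hz
      simp [(hasFDerivAt_norm hz).fderiv, real_inner_comm]
    rw [← fderiv_clm_apply_const_apply
        ((contDiffAt_norm ℝ (n := 2) hx).differentiableAt_fderiv le_rfl),
      hD.fderiv_eq, (hinv.fun_mul (innerSL ℝ e).hasFDerivAt).fderiv]
    simp [real_inner_comm x e]
    field_simp
    ring
  let b := stdOrthonormalBasis ℝ E
  rw [laplacian_eq_sum_fderiv_fderiv b, Finset.sum_congr rfl fun i _ => hterm (b i),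
    Finset.sum_sub_distrib, ← Finset.mul_sum, ← Finset.mul_sum, b.sum_inner_mul_inner,
    real_inner_self_eq_norm_sq]
  simp [b.orthonormal.1]
  field_simp

theorem laplacian_norm_mul {v : E → ℝ} (hx : x ≠ 0) (hv : ContDiffAt ℝ 2 v x) :
    Δ (fun z => ‖z‖ * v z) x = ‖x‖ * (Δ v x + (2 / ‖x‖ ^ 2) * ⟪x, ∇ v x⟫
      + ((Module.finrank ℝ E - 1) / ‖x‖ ^ 2) * v x) := by
  have hnx : ‖x‖ ≠ 0 := norm_ne_zero_iff.mpr hx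
  rw [(contDiffAt_norm ℝ hx).laplacian_mul hv, gradient_norm hx, laplacian_norm hx,
    real_inner_smul_left]
  field_simp

theorem ContDiffAt.laplacian_fderiv_apply_self {u : E → F} (hu : ContDiffAt ℝ 3 u x) :
    Δ (fun z => fderiv ℝ u z z) x = (2 : ℝ) • Δ u x + fderiv ℝ (Δ u) x x := by
  have hu' : ContDiffAt ℝ 2 (fderiv ℝ u) x := hu.fderiv_right (m := 2) (by norm_num)
  have hdu := hu.differentiableAt_fderiv (by norm_num)
  have hB := hu'.differentiableAt_fderiv le_rfl
  have hterm : ∀ h : E, fderiv ℝ (fderiv ℝ fun z => fderiv ℝ u z z) x h h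
      = (2 : ℝ) • fderiv ℝ (fderiv ℝ u) x h h + fderiv ℝ (fderiv ℝ (fderiv ℝ u)) x x h h := by
    intro h
    have hD : (fun z => fderiv ℝ (fun z => fderiv ℝ u z z) z h) =ᶠ[𝓝 x]
        fun z => fderiv ℝ u z h + fderiv ℝ (fderiv ℝ u) z h z := by
      filter_upwards [hu.eventually (by simp)] with z hz
      rw [fderiv_clm_apply (hz.differentiableAt_fderiv (by norm_num)) differentiableAt_fun_id]
      simp
    have hBh : DifferentiableAt ℝ (fun z => fderiv ℝ (fderiv ℝ u) z h) x :=
      hB.clm_apply (differentiableAt_const h)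
    rw [← fderiv_clm_apply_const_apply
        ((hu'.clm_apply contDiffAt_fun_id).differentiableAt_fderiv le_rfl), hD.fderiv_eq,
      fderiv_fun_add (hdu.clm_apply (differentiableAt_const h))
        (hBh.clm_apply differentiableAt_fun_id),
      fderiv_clm_apply hBh differentiableAt_fun_id]
    simp only [add_apply, ContinuousLinearMap.comp_apply, ContinuousLinearMap.flip_apply,
      fderiv_clm_apply_const_apply hdu, fderiv_clm_apply_const_apply hB, fderiv_fun_id,
      ContinuousLinearMap.id_apply]
    rw [hu.fderiv_fderiv_fderiv_comm_right h h x, hu.fderiv_fderiv_fderiv_comm_left h x h,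
      two_smul, add_assoc]
  let b := stdOrthonormalBasis ℝ E
  have hΔu : Δ u = fun z => ∑ i, fderiv ℝ (fderiv ℝ u) z (b i) (b i) :=
    funext (laplacian_eq_sum_fderiv_fderiv b u)
  rw [laplacian_eq_sum_fderiv_fderiv b, Finset.sum_congr rfl fun i _ => hterm (b i),
    Finset.sum_add_distrib, ← Finset.smul_sum, ← laplacian_eq_sum_fderiv_fderiv b u x, hΔu,
    fderiv_fun_sum fun i _ => (hB.clm_apply (differentiableAt_const _)).clm_apply
      (differentiableAt_const _)]
  simp [fderiv_clm_apply_const_apply₂ hB]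

theorem ContDiffAt.laplacian_sub_fderiv_apply_self {u : E → F} (hu : ContDiffAt ℝ 3 u x)
    (hΔ : Δ u =ᶠ[𝓝 x] 0) : Δ (fun z => u z - fderiv ℝ u z z) x = 0 := by
  have hE : ContDiffAt ℝ 2 (fun z => fderiv ℝ u z z) x :=
    (hu.fderiv_right (m := 2) (by norm_num)).clm_apply contDiffAt_fun_id
  change Δ (u - fun z => fderiv ℝ u z z) x = 0
  rw [(hu.of_le (by norm_num)).laplacian_sub hE, hu.laplacian_fderiv_apply_self, hΔ.eq_of_nhds,
    hΔ.fderiv_eq]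
  simp

end Laplacian

theorem lap_eq_laplacian {n : ℕ} {f : EuclideanSpace ℝ (Fin n) → ℝ} {x : EuclideanSpace ℝ (Fin n)}
    (hf : DifferentiableAt ℝ (fderiv ℝ f) x) : lap f x = Δ f x := by
  rw [laplacian_eq_sum_fderiv_fderiv (EuclideanSpace.basisFun (Fin n) ℝ), lap]
  simp [fderiv_clm_apply_const_apply hf]

/-- Let `u` be a `C³` harmonic function on an open set `Ω ⊆ ℝⁿ \ {0}` and
`v y = u y / |y| - ⟨∇u y, y⟩ / |y|`. Then
`Δv y + (2/|y|²)⟨y, ∇v y⟩ + ((n-1)/|y|²) v y = 0` on `Ω`. -/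
theorem stmt6 {n : ℕ} {Ω : Set (EuclideanSpace ℝ (Fin n))} (hΩ : IsOpen Ω)
    (hΩ0 : (0 : EuclideanSpace ℝ (Fin n)) ∉ Ω)
    {u : EuclideanSpace ℝ (Fin n) → ℝ} (hu : ContDiffOn ℝ 3 u Ω)
    (hharm : ∀ x ∈ Ω, lap u x = 0)
    (v : EuclideanSpace ℝ (Fin n) → ℝ)
    (hv : ∀ y, v y = u y / ‖y‖ - ⟪gradient u y, y⟫ / ‖y‖) :
    ∀ y ∈ Ω,
      lap v y + (2 / ‖y‖ ^ 2) * ⟪y, gradient v y⟫ + (((n : ℝ) - 1) / ‖y‖ ^ 2) * v y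
        = 0 := by
  intro y hy
  have hy0 : y ≠ 0 := fun h => hΩ0 (h ▸ hy)
  have hu3 : ContDiffAt ℝ 3 u y := hu.contDiffAt (hΩ.mem_nhds hy)
  set w := fun z => u z - fderiv ℝ u z z
  have hvw : v = fun z => w z / ‖z‖ := funext fun z => by rw [hv, inner_gradient_left, sub_div]
  have hv2 : ContDiffAt ℝ 2 v y := hvw ▸
    ((hu3.of_le (by norm_num)).sub ((hu3.fderiv_right (m := 2) (by norm_num)).clm_apply
      contDiffAt_fun_id)).div (contDiffAt_norm ℝ hy0) (norm_ne_zero_iff.mpr hy0)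
  have hΔu : Δ u =ᶠ[𝓝 y] 0 := by
    filter_upwards [hΩ.mem_nhds hy] with z hz
    rw [← lap_eq_laplacian ((hu.contDiffAt (hΩ.mem_nhds hz)).differentiableAt_fderiv
      (by norm_num)), hharm z hz, Pi.zero_apply]
  have hwv : w =ᶠ[𝓝 y] fun z => ‖z‖ * v z := by
    filter_upwards [eventually_ne_nhds hy0] with z hz
    rw [hvw, mul_div_cancel₀ _ (norm_ne_zero_iff.mpr hz)]
  have key := laplacian_norm_mul hy0 hv2
  rw [← (laplacian_congr_nhds hwv).eq_of_nhds, hu3.laplacian_sub_fderiv_apply_self hΔu,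
    finrank_euclideanSpace_fin] at key
  rw [lap_eq_laplacian (hv2.differentiableAt_fderiv le_rfl)]
  exact (mul_eq_zero.mp key.symm).resolve_left (norm_ne_zero_iff.mpr hy0)
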